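/- arXiv:1403.5042 — 4 statements merged into one kernel-verified Lean document; each statement's English description precedes it below -/
import Mathlib

section
/- For 1 < p < 2, the function f⋆(x) = (1+|x|^{p/(p-1)})^{-(2-p)/p} on ℝ² satisfies −Δ_p f⋆ = 2((2-p)/(p-1))^{p-1} f⋆^{(2p/(2-p))−1}, where Δ_p u = div(|∇u|^{p-2}∇u). -/
open MeasureTheory

/-- The divergence of a vector field on `ℝ²`. -/
noncomputable def divergence2 (V : EuclideanSpace ℝ (Fin 2) → EuclideanSpace ℝ (Fin 2))
    (x : EuclideanSpace ℝ (Fin 2)) : ℝ :=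
  ∑ i : Fin 2, fderiv ℝ (fun y => V y i) x (EuclideanSpace.single i 1)

/-!
With `q = p/(p-1)` the profile is `f⋆ = (1 + |x|^q)^{-(2-p)/p}`, whose gradient is a negative
multiple of `x`. Since `(q-2)(p-1) = 2-p`, the powers of `|x|` cancel in the flux:
`|∇f⋆|^{p-2} ∇f⋆ = -K (1 + |x|^q)^β x` with `K = ((2-p)/(p-1))^{p-1}` and `β = -2(p-1)/p`.
In the plane `div (g x) = 2g + x·∇g`, and `βq = -2` makes the `|x|^q` terms cancel, leaving
`2K (1 + |x|^q)^{β-1} = 2K f⋆^{2p/(2-p)-1}`.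
-/

open Real InnerProductSpace

section RadialProfile

variable {E : Type*} [NormedAddCommGroup E] [InnerProductSpace ℝ E]

theorem hasFDerivAt_one_add_norm_rpow_rpow (x : E) {q : ℝ} (hq : 1 < q) (e : ℝ) :
    HasFDerivAt (fun y : E => (1 + ‖y‖ ^ q) ^ e)
      ((e * q * (1 + ‖x‖ ^ q) ^ (e - 1) * ‖x‖ ^ (q - 2)) • innerSL ℝ x) x := by
  have hpos : 0 < 1 + ‖x‖ ^ q := by positivity
  convert ((hasFDerivAt_norm_rpow x hq).const_add 1).rpow_const (p := e) (Or.inl hpos.ne')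
    using 1
  rw [smul_smul]
  ring_nf

theorem gradient_one_add_norm_rpow_rpow [CompleteSpace E] (x : E) {q : ℝ} (hq : 1 < q)
    (e : ℝ) :
    gradient (fun y : E => (1 + ‖y‖ ^ q) ^ e) x
      = (e * q * (1 + ‖x‖ ^ q) ^ (e - 1) * ‖x‖ ^ (q - 2)) • x := by
  refine HasGradientAt.gradient ?_
  rw [hasGradientAt_iff_hasFDerivAt]
  refine (hasFDerivAt_one_add_norm_rpow_rpow x hq e).congr_fderiv ?_
  ext v
  simp

theorem norm_smul_rpow_smul_smul {c : ℝ} (hc : 0 ≤ c) {r : ℝ} (hr : r + 1 ≠ 0) (v : E) :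
    ‖c • v‖ ^ r • (c • v) = (c ^ (r + 1) * ‖v‖ ^ r) • v := by
  rw [smul_smul, norm_smul, Real.norm_of_nonneg hc, mul_rpow hc (norm_nonneg v),
    rpow_add_one' hc hr]
  ring_nf

theorem norm_gradient_rpow_smul_gradient_aubinTalenti [CompleteSpace E] {p : ℝ} (hp1 : 1 < p)
    (hp2 : p < 2) (y : E) :
    ‖gradient (fun y : E => (1 + ‖y‖ ^ (p / (p - 1))) ^ (-((2 - p) / p))) y‖ ^ (p - 2)
        • gradient (fun y : E => (1 + ‖y‖ ^ (p / (p - 1))) ^ (-((2 - p) / p))) y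
      = (-((2 - p) / (p - 1)) ^ (p - 1) * (1 + ‖y‖ ^ (p / (p - 1))) ^ (-(2 * (p - 1) / p)))
        • y := by
  have hp0 : 0 < p - 1 := by linarith
  set q := p / (p - 1) with hq
  have hq1 : 1 < q := by rw [hq, lt_div_iff₀ hp0]; linarith
  set U := 1 + ‖y‖ ^ q
  have hU : 0 < U := by positivity
  set A := (2 - p) / (p - 1) * U ^ (-((2 - p) / p) - 1) * ‖y‖ ^ (q - 2)
  have hA : 0 ≤ A := by
    have : 0 < 2 - p := by linarith
    positivity
  have hcoeff : -((2 - p) / p) * q * U ^ (-((2 - p) / p) - 1) * ‖y‖ ^ (q - 2) = -A := by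
    have hαq : (2 - p) / p * q = (2 - p) / (p - 1) := by rw [hq]; field_simp
    rw [neg_mul, hαq]
    ring
  rw [gradient_one_add_norm_rpow_rpow y hq1, hcoeff, neg_smul, norm_neg, smul_neg,
    norm_smul_rpow_smul_smul hA (by linarith), show p - 2 + 1 = p - 1 by ring, ← neg_smul]
  rcases eq_or_ne y 0 with rfl | hy
  · simp
  congr 1
  have hny : 0 < ‖y‖ := norm_pos_iff.mpr hy
  have hy_exp : ‖y‖ ^ ((q - 2) * (p - 1)) * ‖y‖ ^ (p - 2) = 1 := by
    rw [← rpow_add hny, show (q - 2) * (p - 1) + (p - 2) = 0 by rw [hq]; field_simp; ring,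
      rpow_zero]
  have hU_exp : (-((2 - p) / p) - 1) * (p - 1) = -(2 * (p - 1) / p) := by
    field_simp; ring
  rw [mul_rpow (by positivity) (by positivity), mul_rpow (by positivity) (by positivity),
    ← rpow_mul hU.le, ← rpow_mul (norm_nonneg y), hU_exp]
  linear_combination -((2 - p) / (p - 1)) ^ (p - 1) * U ^ (-(2 * (p - 1) / p)) * hy_exp

end RadialProfile

theorem divergence2_smul_self {g : EuclideanSpace ℝ (Fin 2) → ℝ}
    {g' : EuclideanSpace ℝ (Fin 2) →L[ℝ] ℝ} {x : EuclideanSpace ℝ (Fin 2)}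
    (hg : HasFDerivAt g g' x) :
    divergence2 (fun y => g y • y) x = 2 * g x + g' x := by
  have hcomp (i : Fin 2) :
      fderiv ℝ (fun y => (g y • y) i) x (EuclideanSpace.single i 1)
        = g' (EuclideanSpace.single i 1) * x i + g x := by
    have hd : HasFDerivAt (fun y : EuclideanSpace ℝ (Fin 2) => g y * y i)
        (g x • EuclideanSpace.proj i + x i • g') x :=
      hg.mul (EuclideanSpace.proj (𝕜 := ℝ) (ι := Fin 2) i).hasFDerivAt
    simp only [PiLp.smul_apply, smul_eq_mul, hd.fderiv]
    simp
    ring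
  have hg'x :
      g' x = g' (EuclideanSpace.single 0 1) * x 0 + g' (EuclideanSpace.single 1 1) * x 1 := by
    have hx : x = x 0 • EuclideanSpace.single 0 1 + x 1 • EuclideanSpace.single 1 1 := by
      ext i; fin_cases i <;> simp
    conv_lhs => rw [hx]
    simp only [map_add, map_smul, smul_eq_mul]
    ring
  rw [divergence2, Fin.sum_univ_two, hcomp, hcomp, hg'x]
  ring

/-- For `1 < p < 2`, the Aubin-Talenti profile `f⋆(x) = (1+|x|^{p/(p-1)})^{-(2-p)/p}`
satisfies `-Δ_p f⋆ = 2((2-p)/(p-1))^{p-1} f⋆^{2p/(2-p) - 1}` where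
`Δ_p u = div(|∇u|^{p-2} ∇u)`. -/
theorem aubin_talenti_pLaplacian (p : ℝ) (hp1 : 1 < p) (hp2 : p < 2)
    (fstar : EuclideanSpace ℝ (Fin 2) → ℝ)
    (hfstar : ∀ x, fstar x = (1 + ‖x‖ ^ (p / (p - 1))) ^ (-((2 - p) / p))) :
    ∀ x : EuclideanSpace ℝ (Fin 2),
      -(divergence2 (fun y => ‖gradient fstar y‖ ^ (p - 2) • gradient fstar y) x)
        = 2 * ((2 - p) / (p - 1)) ^ (p - 1) * (fstar x) ^ (2 * p / (2 - p) - 1) := by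
  obtain rfl : fstar = _ := funext hfstar
  intro x
  have hp0 : 0 < p - 1 := by linarith
  set q := p / (p - 1) with hq
  have hq1 : 1 < q := by rw [hq, lt_div_iff₀ hp0]; linarith
  set K := ((2 - p) / (p - 1)) ^ (p - 1)
  set β := -(2 * (p - 1) / p) with hβ
  set U := 1 + ‖x‖ ^ q
  have hU : 0 < U := by positivity
  have hdiv :=
    divergence2_smul_self ((hasFDerivAt_one_add_norm_rpow_rpow x hq1 β).const_mul (-K))
  simp only [smul_apply, innerSL_apply_apply, real_inner_self_eq_norm_sq, smul_eq_mul] at hdiv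
  have hnorm : ‖x‖ ^ (q - 2) * ‖x‖ ^ 2 = ‖x‖ ^ q := by
    rw [← rpow_natCast, ← rpow_add' (norm_nonneg x) (by norm_num; linarith)]
    norm_num
  have hβq : β * q = -2 := by rw [hβ, hq]; field_simp
  have hexp : -((2 - p) / p) * (2 * p / (2 - p) - 1) = β - 1 := by
    have : 2 - p ≠ 0 := by linarith
    rw [hβ]; field_simp; ring
  have hUβ : U ^ β = U ^ (β - 1) * U := by rw [← rpow_add_one hU.ne', sub_add_cancel]
  rw [funext (norm_gradient_rpow_smul_gradient_aubinTalenti hp1 hp2), hdiv, ← rpow_mul hU.le,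
    hexp, hUβ]
  linear_combination (K * U ^ (β - 1)) * (β * q * hnorm + ‖x‖ ^ q * hβq)
end

section
/- Rigidity for the ultraspherical Onofri equation: for 0 < λ < 1, the only smooth solution f on (−1,1), smooth up to the boundary, of −(1/2)((1−z²)f'' − 2z f') + λ = λ e^f is the constant f ≡ 0. -/
open Set MeasureTheory intervalIntegral Real Filter

noncomputable def Aa (x : ℝ) : ℝ := (Real.log (1 + x) - Real.log (1 - x)) / 2

noncomputable def PhiA (y : ℝ) : ℝ :=
  (-(Real.negMulLog (1 + y)) - Real.negMulLog (1 - y)) / 2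

lemma continuous_PhiA : Continuous PhiA := by
  unfold PhiA
  fun_prop

lemma hasDerivAt_Aa {x : ℝ} (h1 : -1 < x) (h2 : x < 1) :
    HasDerivAt Aa (1 / (1 - x ^ 2)) x := by
  have h1' : (0:ℝ) < 1 + x := by linarith
  have h2' : (0:ℝ) < 1 - x := by linarith
  have d1 : HasDerivAt (fun x : ℝ => Real.log (1 + x)) (1 / (1 + x)) x := by
    simpa using (((hasDerivAt_id x).const_add 1).log h1'.ne')
  have d2 : HasDerivAt (fun x : ℝ => Real.log (1 - x)) (-1 / (1 - x)) x := by
    simpa using (((hasDerivAt_id x).const_sub 1).log h2'.ne')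
  have := (d1.sub d2).div_const 2
  refine this.congr_deriv ?_
  have hx : (1 - x^2) = (1+x)*(1-x) := by ring
  rw [hx]
  field_simp
  ring

lemma hasDerivAt_PhiA {y : ℝ} (h1 : -1 < y) (h2 : y < 1) :
    HasDerivAt PhiA (Aa y) y := by
  have h1' : (0:ℝ) < 1 + y := by linarith
  have h2' : (0:ℝ) < 1 - y := by linarith
  have d1 : HasDerivAt (fun y : ℝ => Real.negMulLog (1 + y))
      (-Real.log (1 + y) - 1) y := by
    exact ((Real.hasDerivAt_negMulLog h1'.ne').comp y ((hasDerivAt_id y).const_add 1)).congr_deriv (by simp)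
  have d2 : HasDerivAt (fun y : ℝ => Real.negMulLog (1 - y))
      ((-Real.log (1 - y) - 1) * (-1)) y :=
    (Real.hasDerivAt_negMulLog h2'.ne').comp y ((hasDerivAt_id y).const_sub 1)
  have := ((d1.neg.sub d2).div_const 2)
  refine this.congr_deriv ?_
  unfold Aa
  ring

lemma II_log_base : IntervalIntegrable Real.log volume 0 2 := by
  have hrp : IntervalIntegrable (fun x : ℝ => 2 * x ^ (-(1:ℝ)/2)) volume 0 2 :=
    (intervalIntegral.intervalIntegrable_rpow' (by norm_num)).const_mul 2
  refine hrp.mono_fun Real.measurable_log.aestronglyMeasurable ?_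
  have hsub : Set.uIoc (0:ℝ) 2 = Ioc (0:ℝ) 2 := uIoc_of_le (by norm_num)
  filter_upwards [ae_restrict_mem measurableSet_uIoc] with x hx
  rw [hsub] at hx
  obtain ⟨hx0, hx2⟩ := hx
  have hrpos : (0:ℝ) < x ^ (-(1:ℝ)/2) := Real.rpow_pos_of_pos hx0 _
  simp only [Real.norm_eq_abs]
  rw [abs_of_pos (by positivity : (0:ℝ) < 2 * x ^ (-(1:ℝ)/2))]
  rcases le_total x 1 with hx1 | hx1
  · -- |log x| = -log x = log x⁻¹ ≤ (x⁻¹)^(1/2) / (1/2) = 2 * x^(-1/2)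
    have hlogle : Real.log x⁻¹ ≤ (x⁻¹) ^ ((1:ℝ)/2) / ((1:ℝ)/2) :=
      Real.log_le_rpow_div (by positivity) (by norm_num)
    have h1 : |Real.log x| = Real.log x⁻¹ := by
      rw [Real.log_inv]
      rw [abs_of_nonpos (Real.log_nonpos hx0.le hx1)]
    have h2 : (x⁻¹) ^ ((1:ℝ)/2) = x ^ (-(1:ℝ)/2) := by
      rw [Real.inv_rpow hx0.le, ← Real.rpow_neg hx0.le]
      norm_num
    have h3 : x ^ (-(1:ℝ)/2) / ((1:ℝ)/2) = 2 * x ^ (-(1:ℝ)/2) := by ring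
    rw [h1]
    rw [h2, h3] at hlogle
    linarith
  · have hlog2 : |Real.log x| = Real.log x := abs_of_nonneg (Real.log_nonneg hx1)
    have hle : Real.log x ≤ Real.log 2 := Real.log_le_log hx0 hx2
    have hl2 : Real.log 2 < 1 := by
      have := Real.log_two_lt_d9
      linarith
    have hge : (1:ℝ) ≤ 2 * x ^ (-(1:ℝ)/2) := by
      have hx2' : x ^ ((1:ℝ)/2) ≤ 2 ^ ((1:ℝ)/2) :=
        Real.rpow_le_rpow hx0.le hx2 (by norm_num)
      have h2half : (2:ℝ) ^ ((1:ℝ)/2) ≤ 2 := by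
        calc (2:ℝ) ^ ((1:ℝ)/2) ≤ 2 ^ (1:ℝ) :=
              Real.rpow_le_rpow_of_exponent_le (by norm_num) (by norm_num)
          _ = 2 := by norm_num
      have hxpos : (0:ℝ) < x ^ ((1:ℝ)/2) := Real.rpow_pos_of_pos hx0 _
      have hinv : x ^ (-(1:ℝ)/2) = (x ^ ((1:ℝ)/2))⁻¹ := by
        rw [← Real.rpow_neg hx0.le]
        norm_num
      rw [hinv, ← div_eq_mul_inv, le_div_iff₀ hxpos]
      calc (1:ℝ) * x ^ ((1:ℝ)/2) = x ^ ((1:ℝ)/2) := by ring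
        _ ≤ 2 := le_trans hx2' h2half
    linarith

lemma II_log1p : IntervalIntegrable (fun y : ℝ => Real.log (1 + y)) volume (-1) 1 := by
  have h := II_log_base.comp_add_right 1
  norm_num at h
  convert h using 1
  funext y
  rw [add_comm]

lemma II_log1m : IntervalIntegrable (fun y : ℝ => Real.log (1 - y)) volume (-1) 1 := by
  have h := (II_log_base.comp_sub_left 1).symm
  norm_num at h
  exact h

lemma II_Aa {a b : ℝ} (ha : a ∈ Icc (-1:ℝ) 1) (hb : b ∈ Icc (-1:ℝ) 1) :
    IntervalIntegrable Aa volume a b := by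
  have hsub : uIcc a b ⊆ uIcc (-1:ℝ) 1 := by
    rw [uIcc_of_le (by norm_num : (-1:ℝ) ≤ 1)]
    exact uIcc_subset_Icc ha hb
  have h1 := II_log1p.mono_set hsub
  have h2 := II_log1m.mono_set hsub
  exact (h1.sub h2).div_const 2

lemma PhiA_neg_one : PhiA (-1) = Real.log 2 := by
  unfold PhiA
  norm_num [Real.negMulLog]

lemma PhiA_one : PhiA 1 = Real.log 2 := by
  unfold PhiA
  norm_num [Real.negMulLog]

lemma int_Aa_left {x : ℝ} (hx : x ∈ Icc (-1:ℝ) 1) :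
    ∫ y in (-1:ℝ)..x, Aa y = PhiA x - Real.log 2 := by
  rw [← PhiA_neg_one]
  apply integral_eq_sub_of_hasDeriv_right_of_le hx.1
    (continuous_PhiA.continuousOn)
    (fun y hy => ?_) (II_Aa (by norm_num) hx)
  exact (hasDerivAt_PhiA (by linarith [hy.1]) (by linarith [hy.2, hx.2])).hasDerivWithinAt

lemma int_Aa_right {x : ℝ} (hx : x ∈ Icc (-1:ℝ) 1) :
    ∫ y in x..(1:ℝ), Aa y = Real.log 2 - PhiA x := by
  rw [← PhiA_one]
  apply integral_eq_sub_of_hasDeriv_right_of_le hx.2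
    (continuous_PhiA.continuousOn)
    (fun y hy => ?_) (II_Aa hx (by norm_num))
  exact (hasDerivAt_PhiA (by linarith [hy.1, hx.1]) (by linarith [hy.2])).hasDerivWithinAt

noncomputable def Qq (x : ℝ) : ℝ :=
  ((1 - x) * Real.negMulLog (1 + x) - (1 + x) * Real.negMulLog (1 - x)) / 2 + x

lemma Qq_eq {x : ℝ} : Qq x = (x ^ 2 - 1) * Aa x + x := by
  unfold Qq Aa Real.negMulLog
  ring

lemma int_two_x_Aa : ∫ x in (-1:ℝ)..1, 2 * x * Aa x = 2 := by
  have key : ∫ x in (-1:ℝ)..1, 2 * x * Aa x = Qq 1 - Qq (-1) := by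
    apply integral_eq_sub_of_hasDeriv_right_of_le (by norm_num)
      (Continuous.continuousOn (by unfold Qq; fun_prop))
      (fun y hy => ?_)
      (((II_Aa (by norm_num) (by norm_num)).continuousOn_mul
        (by fun_prop : Continuous (fun x : ℝ => 2 * x)).continuousOn))
    have h1 := hy.1
    have h2 := hy.2
    have hd : HasDerivAt (fun x : ℝ => (x ^ 2 - 1) * Aa x + x)
        (2 * y * Aa y) y := by
      have hA := hasDerivAt_Aa h1 h2
      have hpoly : HasDerivAt (fun x : ℝ => x ^ 2 - 1) (2 * y) y := by
        simpa using ((hasDerivAt_pow 2 y).sub_const 1)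
      have := ((hpoly.mul hA).add (hasDerivAt_id y))
      refine this.congr_deriv ?_
      have hne : (1 : ℝ) - y ^ 2 ≠ 0 := by nlinarith
      field_simp
      ring
    have : HasDerivAt Qq (2 * y * Aa y) y := by
      apply hd.congr_of_eventuallyEq
      filter_upwards [] with z
      exact Qq_eq
    exact this.hasDerivWithinAt
  rw [key, Qq_eq, Qq_eq]
  unfold Aa
  norm_num [Real.negMulLog]

noncomputable def Tt (y : ℝ) : ℝ :=
  (-2 * (1 + y) * Real.negMulLog (1 + y) - (1 + y) ^ 2
    + 2 * (1 - y) * Real.negMulLog (1 - y) + (1 - y) ^ 2) / 8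

lemma int_PhiA : ∫ x in (-1:ℝ)..1, PhiA x = 2 * Real.log 2 - 1 := by
  have key : ∫ x in (-1:ℝ)..1, PhiA x = Tt 1 - Tt (-1) := by
    apply integral_eq_sub_of_hasDeriv_right_of_le (by norm_num)
      (Continuous.continuousOn (by unfold Tt; fun_prop))
      (fun y hy => ?_)
      (continuous_PhiA.intervalIntegrable _ _)
    have h1 := hy.1
    have h2 := hy.2
    have h1' : (0:ℝ) < 1 + y := by linarith
    have h2' : (0:ℝ) < 1 - y := by linarith
    have hd : HasDerivAt (fun x : ℝ =>
        ((1 + x) ^ 2 * (2 * Real.log (1 + x) - 1)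
          - (1 - x) ^ 2 * (2 * Real.log (1 - x) - 1)) / 8) (PhiA y) y := by
      have dl1 : HasDerivAt (fun x : ℝ => Real.log (1 + x)) (1 / (1 + y)) y := by
        simpa using (((hasDerivAt_id y).const_add 1).log h1'.ne')
      have dl2 : HasDerivAt (fun x : ℝ => Real.log (1 - x)) (-1 / (1 - y)) y := by
        simpa using (((hasDerivAt_id y).const_sub 1).log h2'.ne')
      have dp1 : HasDerivAt (fun x : ℝ => (1 + x) ^ 2) (2 * (1 + y)) y := by
        have := ((hasDerivAt_id y).const_add 1).pow 2
        exact this.congr_deriv (by simp)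
      have dp2 : HasDerivAt (fun x : ℝ => (1 - x) ^ 2) (-(2 * (1 - y))) y := by
        have := ((hasDerivAt_id y).const_sub 1).pow 2
        refine this.congr_deriv ?_
        simp
      have := (((dp1.mul ((dl1.const_mul 2).sub_const 1)).sub
        (dp2.mul ((dl2.const_mul 2).sub_const 1))).div_const 8)
      refine this.congr_deriv ?_
      unfold PhiA Real.negMulLog
      field_simp
      ring
    have : HasDerivAt Tt (PhiA y) y := by
      apply hd.congr_of_eventuallyEq
      filter_upwards [] with z
      unfold Tt Real.negMulLog
      ring
    exact this.hasDerivWithinAt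
  rw [key]
  unfold Tt
  norm_num [Real.negMulLog]
  ring

lemma ae_ne_pm_one : ∀ᵐ t : ℝ, t ∉ ({-1, 1} : Set ℝ) := by
  have : volume ({-1, 1} : Set ℝ) = 0 :=
    (Set.Finite.insert _ (Set.finite_singleton _)).measure_zero _
  exact measure_eq_zero_iff_ae_notMem.mp this

lemma poincare {w W : ℝ → ℝ} (hw : Continuous w) (hW : Continuous W)
    (hd : ∀ x, HasDerivAt w (W x) x)
    (hmean : (∫ x in (-1:ℝ)..1, w x) = 0) :
    (∫ x in (-1:ℝ)..1, (w x)^2) ≤ ∫ x in (-1:ℝ)..1, (1 - x^2) * (W x)^2 := by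
  have hcontGW : Continuous fun s : ℝ => (1 - s^2) * (W s)^2 := by fun_prop
  have hcontw2 : Continuous fun s : ℝ => (w s)^2 := by fun_prop
  set G := ∫ x in (-1:ℝ)..1, (1 - x^2) * (W x)^2 with hGdef
  set S := ∫ x in (-1:ℝ)..1, (w x)^2 with hSdef
  -- subinterval bound
  have hGsub : ∀ y x : ℝ, -1 ≤ y → y ≤ x → x ≤ 1 →
      (∫ s in y..x, (1 - s^2) * (W s)^2) ≤ G := by
    intro y x hy hyx hx
    apply integral_mono_interval hy hyx hx ?_ (hcontGW.intervalIntegrable _ _)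
    refine (ae_restrict_iff' measurableSet_Ioc).mpr (ae_of_all _ fun s hs => ?_)
    have h1 : -1 < s := hs.1
    have h2 : s ≤ 1 := hs.2
    have : (0:ℝ) ≤ 1 - s^2 := by nlinarith
    positivity
  -- pairwise bound
  have hpair : ∀ y x : ℝ, -1 < y → y ≤ x → x < 1 →
      (w x - w y)^2 ≤ G * (Aa x - Aa y) := by
    intro y x h1 hyx h2
    rcases eq_or_lt_of_le hyx with rfl | hlt
    · simp
    have hsubIoo : ∀ s ∈ uIcc y x, -1 < s ∧ s < 1 := by
      intro s hs
      rw [uIcc_of_le hyx] at hs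
      exact ⟨lt_of_lt_of_le h1 hs.1, lt_of_le_of_lt hs.2 h2⟩
    have hcont_inv : ContinuousOn (fun s : ℝ => 1 / (1 - s^2)) (uIcc y x) := by
      apply ContinuousOn.div continuousOn_const (by fun_prop)
      intro s hs
      obtain ⟨hs1, hs2⟩ := hsubIoo s hs
      nlinarith
    have hB : (∫ s in y..x, 1 / (1 - s^2)) = Aa x - Aa y := by
      apply integral_eq_sub_of_hasDerivAt
      · intro t ht
        obtain ⟨ht1, ht2⟩ := hsubIoo t ht
        exact hasDerivAt_Aa ht1 ht2
      · exact hcont_inv.intervalIntegrable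
    have hBpos : 0 < Aa x - Aa y := by
      rw [← hB]
      have h1le : (∫ s in y..x, (1:ℝ)) ≤ ∫ s in y..x, 1 / (1 - s^2) := by
        apply integral_mono_on hyx intervalIntegrable_const hcont_inv.intervalIntegrable
        intro s hs
        rw [← uIcc_of_le hyx] at hs
        obtain ⟨hs1, hs2⟩ := hsubIoo s hs
        have hpos : (0:ℝ) < 1 - s^2 := by nlinarith
        rw [le_div_iff₀ hpos]
        nlinarith
      have : (∫ s in y..x, (1:ℝ)) = x - y := by simp
      linarith
    have hwd : w x - w y = ∫ s in y..x, W s := by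
      rw [integral_eq_sub_of_hasDerivAt (fun t _ => hd t) (hW.intervalIntegrable _ _)]
    set I := ∫ s in y..x, (1 - s^2) * (W s)^2 with hIdef
    have hIG : I ≤ G := hGsub y x h1.le hyx h2.le
    have hquad : ∀ c : ℝ, 0 ≤ (Aa x - Aa y) * (c*c) + (-2*(w x - w y)) * c + I := by
      intro c
      have hEq : EqOn (fun s : ℝ => (1 - s^2) * (W s - c / (1 - s^2))^2)
          (fun s : ℝ => ((1 - s^2) * (W s)^2 - (2*c) * W s) + c^2 * (1 / (1 - s^2)))
          (uIcc y x) := by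
        intro s hs
        obtain ⟨hs1, hs2⟩ := hsubIoo s hs
        have hne : (1:ℝ) - s^2 ≠ 0 := by nlinarith
        field_simp
        ring
      have hnn : 0 ≤ ∫ s in y..x, (1 - s^2) * (W s - c / (1 - s^2))^2 := by
        apply integral_nonneg hyx
        intro s hs
        rw [← uIcc_of_le hyx] at hs
        obtain ⟨hs1, hs2⟩ := hsubIoo s hs
        have : (0:ℝ) ≤ 1 - s^2 := by nlinarith
        positivity
      rw [integral_congr hEq] at hnn
      rw [integral_add (((hcontGW.intervalIntegrable _ _).sub
            ((hW.intervalIntegrable _ _).const_mul _)))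
          (hcont_inv.intervalIntegrable.const_mul _),
        integral_sub (hcontGW.intervalIntegrable _ _)
          ((hW.intervalIntegrable _ _).const_mul _),
        intervalIntegral.integral_const_mul, intervalIntegral.integral_const_mul, hB, ← hwd] at hnn
      nlinarith [hnn]
    have hdisc := discrim_le_zero hquad
    rw [discrim] at hdisc
    have hd2 : (w x - w y)^2 ≤ I * (Aa x - Aa y) := by nlinarith
    calc (w x - w y)^2 ≤ I * (Aa x - Aa y) := hd2
      _ ≤ G * (Aa x - Aa y) := mul_le_mul_of_nonneg_right hIG hBpos.le
  -- inner evaluation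
  have inner_eval : ∀ x : ℝ, (∫ y in (-1:ℝ)..1, (w x - w y)^2) = 2*(w x)^2 + S := by
    intro x
    have hrw : (fun y : ℝ => (w x - w y)^2)
        = fun y : ℝ => ((w x)^2 + (-(2*(w x))) * w y) + (w y)^2 := by
      funext y; ring
    rw [hrw, integral_add (intervalIntegrable_const.add
          ((hw.intervalIntegrable _ _).const_mul _)) (hcontw2.intervalIntegrable _ _),
      integral_add intervalIntegrable_const ((hw.intervalIntegrable _ _).const_mul _),
      intervalIntegral.integral_const, intervalIntegral.integral_const_mul, hmean]
    simp only [smul_eq_mul, mul_zero]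
    ring
  -- the kernel evaluation bound for each interior x
  have hinner : ∀ x : ℝ, -1 < x → x < 1 →
      2*(w x)^2 + S ≤ G * (2*x*Aa x - 2*PhiA x + 2*Real.log 2) := by
    intro x h1 h2
    have hxm : x ∈ Icc (-1:ℝ) 1 := ⟨h1.le, h2.le⟩
    have hsplit : (∫ y in (-1:ℝ)..1, (w x - w y)^2)
        = (∫ y in (-1:ℝ)..x, (w x - w y)^2) + ∫ y in x..(1:ℝ), (w x - w y)^2 := by
      rw [integral_add_adjacent_intervals] <;>
        exact (by fun_prop : Continuous fun y => (w x - w y)^2).intervalIntegrable _ _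
    have hleft : (∫ y in (-1:ℝ)..x, (w x - w y)^2)
        ≤ G * ((x+1) * Aa x - (PhiA x - Real.log 2)) := by
      have hmono : (∫ y in (-1:ℝ)..x, (w x - w y)^2)
          ≤ ∫ y in (-1:ℝ)..x, G * (Aa x - Aa y) := by
        apply integral_mono_ae_restrict h1.le
          ((by fun_prop : Continuous fun y => (w x - w y)^2).intervalIntegrable _ _)
          ((intervalIntegrable_const.sub (II_Aa (by norm_num) hxm)).const_mul _)
        filter_upwards [ae_restrict_of_ae ae_ne_pm_one, ae_restrict_mem measurableSet_Icc]
          with y hy1 hy2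
        have hy1' : y ≠ -1 := fun h => hy1 (by simp [h])
        have : -1 < y := lt_of_le_of_ne hy2.1 (Ne.symm hy1')
        exact hpair y x this hy2.2 h2
      have heval : (∫ y in (-1:ℝ)..x, G * (Aa x - Aa y))
          = G * ((x+1) * Aa x - (PhiA x - Real.log 2)) := by
        rw [intervalIntegral.integral_const_mul, integral_sub intervalIntegrable_const (II_Aa (by norm_num) hxm),
          intervalIntegral.integral_const, int_Aa_left hxm]
        simp only [smul_eq_mul]
        ring
      linarith
    have hright : (∫ y in x..(1:ℝ), (w x - w y)^2)
        ≤ G * ((Real.log 2 - PhiA x) - (1-x) * Aa x) := by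
      have hmono : (∫ y in x..(1:ℝ), (w x - w y)^2)
          ≤ ∫ y in x..(1:ℝ), G * (Aa y - Aa x) := by
        apply integral_mono_ae_restrict h2.le
          ((by fun_prop : Continuous fun y => (w x - w y)^2).intervalIntegrable _ _)
          (((II_Aa hxm (by norm_num)).sub intervalIntegrable_const).const_mul _)
        filter_upwards [ae_restrict_of_ae ae_ne_pm_one, ae_restrict_mem measurableSet_Icc]
          with y hy1 hy2
        have hy1' : y ≠ 1 := fun h => hy1 (by simp [h])
        have hylt : y < 1 := lt_of_le_of_ne hy2.2 hy1'
        have := hpair x y h1 hy2.1 hylt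
        calc (w x - w y)^2 = (w y - w x)^2 := by ring
          _ ≤ G * (Aa y - Aa x) := this
      have heval : (∫ y in x..(1:ℝ), G * (Aa y - Aa x))
          = G * ((Real.log 2 - PhiA x) - (1-x) * Aa x) := by
        rw [intervalIntegral.integral_const_mul, integral_sub (II_Aa hxm (by norm_num)) intervalIntegrable_const,
          intervalIntegral.integral_const, int_Aa_right hxm]
        simp only [smul_eq_mul]
        try ring
      linarith
    have := inner_eval x
    have hcomb : 2*(w x)^2 + S
        ≤ G * ((x+1) * Aa x - (PhiA x - Real.log 2))
          + G * ((Real.log 2 - PhiA x) - (1-x) * Aa x) := by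
      rw [← this, hsplit]
      exact add_le_add hleft hright
    calc 2*(w x)^2 + S ≤ _ := hcomb
      _ = G * (2*x*Aa x - 2*PhiA x + 2*Real.log 2) := by ring
  -- integrate the bound
  have hKint : IntervalIntegrable
      (fun x : ℝ => G * (2*x*Aa x - 2*PhiA x + 2*Real.log 2)) volume (-1) 1 := by
    apply IntervalIntegrable.const_mul
    apply IntervalIntegrable.add
    · apply IntervalIntegrable.sub
      · exact (II_Aa (by norm_num) (by norm_num)).continuousOn_mul (by fun_prop)
      · exact ((continuous_PhiA.intervalIntegrable _ _).const_mul _)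
    · exact intervalIntegrable_const
  have hfinal : (∫ x in (-1:ℝ)..1, (2*(w x)^2 + S))
      ≤ ∫ x in (-1:ℝ)..1, G * (2*x*Aa x - 2*PhiA x + 2*Real.log 2) := by
    apply integral_mono_ae_restrict (by norm_num : (-1:ℝ) ≤ 1)
      ((by fun_prop : Continuous fun x => 2*(w x)^2 + S).intervalIntegrable _ _) hKint
    filter_upwards [ae_restrict_of_ae ae_ne_pm_one, ae_restrict_mem measurableSet_Icc]
      with x hx1 hx2
    have hx1' : x ≠ -1 := fun h => hx1 (by simp [h])
    have hx2' : x ≠ 1 := fun h => hx1 (by simp [h])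
    exact hinner x (lt_of_le_of_ne hx2.1 (Ne.symm hx1')) (lt_of_le_of_ne hx2.2 hx2')
  have hlhs : (∫ x in (-1:ℝ)..1, (2*(w x)^2 + S)) = 2*S + 2*S := by
    rw [integral_add ((hcontw2.intervalIntegrable _ _).const_mul _) intervalIntegrable_const,
      intervalIntegral.integral_const_mul, intervalIntegral.integral_const]
    simp only [smul_eq_mul]
    ring
  have hrhs : (∫ x in (-1:ℝ)..1, G * (2*x*Aa x - 2*PhiA x + 2*Real.log 2)) = 4 * G := by
    rw [intervalIntegral.integral_const_mul]
    have : (∫ x in (-1:ℝ)..1, (2*x*Aa x - 2*PhiA x + 2*Real.log 2)) = 4 := by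
      rw [integral_add (((II_Aa (by norm_num) (by norm_num)).continuousOn_mul
            (by fun_prop)).sub ((continuous_PhiA.intervalIntegrable _ _).const_mul _))
          intervalIntegrable_const,
        integral_sub ((II_Aa (by norm_num) (by norm_num)).continuousOn_mul (by fun_prop))
          ((continuous_PhiA.intervalIntegrable _ _).const_mul _),
        int_two_x_Aa, intervalIntegral.integral_const_mul, int_PhiA, intervalIntegral.integral_const]
      simp only [smul_eq_mul]
      ring
    rw [this]
    ring
  rw [hlhs, hrhs] at hfinal
  linarith

/-- Rigidity for the ultraspherical Onofri equation: for `0 < λ < 1`, the only smooth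
solution (up to the boundary) on `(-1,1)` of `-(1/2)((1-z²)f'' - 2z f') + λ = λ e^f`
is the constant `f ≡ 0`. -/
theorem ultraspherical_rigidity (f : ℝ → ℝ) (lam : ℝ)
    (hlam0 : 0 < lam) (hlam1 : lam < 1)
    (hf : ContDiff ℝ (⊤ : ℕ∞) f)
    (heq : ∀ z ∈ Set.Icc (-1 : ℝ) 1,
      -(1 / 2) * ((1 - z ^ 2) * deriv (deriv f) z - 2 * z * deriv f z) + lam
        = lam * Real.exp (f z)) :
    ∀ z ∈ Set.Icc (-1 : ℝ) 1, f z = 0 := by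
  set g := deriv f with hgdef
  set h := deriv g with hhdef
  have hfi : ContDiff ℝ ((⊤ : ℕ∞) : WithTop ℕ∞) f := hf.of_le (by simp)
  have hone : (1 : WithTop ℕ∞) ≤ ((⊤ : ℕ∞) : WithTop ℕ∞) := by
    exact_mod_cast le_top
  have hfd : Differentiable ℝ f := hfi.differentiable (by simp)
  have hf' : ContDiff ℝ ((⊤ : ℕ∞) : WithTop ℕ∞) g := (contDiff_infty_iff_deriv.mp hfi).2
  have hgd : Differentiable ℝ g := hf'.differentiable (by simp)
  have hf'' : ContDiff ℝ ((⊤ : ℕ∞) : WithTop ℕ∞) h := (contDiff_infty_iff_deriv.mp hf').2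
  have hgc : Continuous g := hf'.continuous
  have hhc : Continuous h := hf''.continuous
  have hfc : Continuous f := hf.continuous
  have hfda : ∀ z, HasDerivAt f (g z) z := fun z => (hfd z).hasDerivAt
  have hgda : ∀ z, HasDerivAt g (h z) z := fun z => (hgd z).hasDerivAt
  set w : ℝ → ℝ := fun z => (1 - z^2) * g z with hwdef
  set W : ℝ → ℝ := fun z => (1 - z^2) * h z - 2*z*g z with hWdef
  have hwc : Continuous w := by fun_prop
  have hWc : Continuous W := by fun_prop
  have hwda : ∀ z, HasDerivAt w (W z) z := by
    intro z
    have h1 : HasDerivAt (fun z : ℝ => 1 - z^2) (-(2*z)) z := by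
      simpa using ((hasDerivAt_pow 2 z).const_sub 1)
    have := h1.mul (hgda z)
    refine this.congr_deriv ?_
    simp only [hWdef]
    ring
  have hWicc : ∀ z ∈ Set.Icc (-1:ℝ) 1, W z = 2*lam - 2*lam*Real.exp (f z) := by
    intro z hz
    have hz' := heq z hz
    simp only [hWdef, ← hgdef, ← hhdef] at *
    linarith
  have hWda : ∀ z ∈ Set.Ioo (-1:ℝ) 1,
      HasDerivAt W (-(2*lam)*Real.exp (f z) * g z) z := by
    intro z hz
    have hev : W =ᶠ[nhds z] fun t => 2*lam - 2*lam*Real.exp (f t) := by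
      filter_upwards [Ioo_mem_nhds hz.1 hz.2] with t ht
      exact hWicc t (Set.Ioo_subset_Icc_self ht)
    have hder : HasDerivAt (fun t => 2*lam - 2*lam*Real.exp (f t))
        (-(2*lam)*Real.exp (f z) * g z) z := by
      have hexp : HasDerivAt (fun t => Real.exp (f t)) (Real.exp (f z) * g z) z :=
        (hfda z).exp
      have := (hexp.const_mul (2*lam)).const_sub (2*lam)
      refine this.congr_deriv ?_
      ring
    exact hder.congr_of_eventuallyEq hev
  have hw1 : w 1 = 0 := by simp [hwdef]
  have hwm1 : w (-1) = 0 := by norm_num [hwdef]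
  -- first FTC identity : mean zero
  have hmean : (∫ z in (-1:ℝ)..1, w z) = 0 := by
    set Φ : ℝ → ℝ := fun z => (1 - z^2) * W z + 2*z*w z - (w z)^2/2 with hPhidef
    have hkey : ∫ z in (-1:ℝ)..1, (2 - 2*lam) * w z = Φ 1 - Φ (-1) := by
      apply integral_eq_sub_of_hasDeriv_right_of_le (by norm_num)
        (Continuous.continuousOn (by fun_prop)) (fun z hz => ?_)
        ((by fun_prop : Continuous fun z => (2 - 2*lam) * w z).intervalIntegrable _ _)
      have h1 : HasDerivAt (fun z : ℝ => 1 - z^2) (-(2*z)) z := by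
        simpa using ((hasDerivAt_pow 2 z).const_sub 1)
      have h2 : HasDerivAt (fun z : ℝ => 2*z) 2 z := by
        simpa using (hasDerivAt_id z).const_mul 2
      have hD : HasDerivAt Φ
          ((-(2*z)) * W z + (1 - z^2) * (-(2*lam)*Real.exp (f z) * g z)
            + (2 * w z + 2*z * W z) - (2 * w z * W z)/2) z := by
        have p1 := h1.mul (hWda z hz)
        have p2 := h2.mul (hwda z)
        have p3 := ((hwda z).pow 2).div_const 2
        have := (p1.add p2).sub p3
        refine this.congr_deriv ?_
        ring
      have hWe := hWicc z (Set.Ioo_subset_Icc_self hz)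
      have hrw : ((-(2*z)) * W z + (1 - z^2) * (-(2*lam)*Real.exp (f z) * g z)
            + (2 * w z + 2*z * W z) - (2 * w z * W z)/2) = (2 - 2*lam) * w z := by
        simp only [hwdef]
        linear_combination (-(1 - z^2) * g z) * hWe
      rw [hrw] at hD
      exact hD.hasDerivWithinAt
    have hbd : Φ 1 - Φ (-1) = 0 := by
      simp only [hPhidef]
      rw [hw1, hwm1]
      norm_num
    rw [hbd, intervalIntegral.integral_const_mul] at hkey
    rcases mul_eq_zero.mp hkey with hk | hk
    · linarith
    · exact hk
  -- second FTC identity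
  have hGS : (∫ z in (-1:ℝ)..1, (1 - z^2) * (W z)^2)
      = (2*lam - 1) * ∫ z in (-1:ℝ)..1, (w z)^2 := by
    set Ψ : ℝ → ℝ := fun z => (1 - z^2) * W z * w z + z*(w z)^2 - (w z)^3/3 with hPsidef
    have hkey : ∫ z in (-1:ℝ)..1, ((1 - z^2) * (W z)^2 + (1 - 2*lam) * (w z)^2)
        = Ψ 1 - Ψ (-1) := by
      apply integral_eq_sub_of_hasDeriv_right_of_le (by norm_num)
        (Continuous.continuousOn (by fun_prop)) (fun z hz => ?_)
        ((by fun_prop : Continuous fun z => (1 - z^2) * (W z)^2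
          + (1 - 2*lam) * (w z)^2).intervalIntegrable _ _)
      have h1 : HasDerivAt (fun z : ℝ => 1 - z^2) (-(2*z)) z := by
        simpa using ((hasDerivAt_pow 2 z).const_sub 1)
      have hD : HasDerivAt Ψ
          ((((-(2*z)) * W z + (1 - z^2) * (-(2*lam)*Real.exp (f z) * g z)) * w z
            + ((1 - z^2) * W z) * W z)
            + ((w z)^2 + z * (2 * w z * W z)) - (3 * (w z)^2 * W z)/3) z := by
        have p1 := (h1.mul (hWda z hz)).mul (hwda z)
        have p2 := (hasDerivAt_id' (x := z)).mul ((hwda z).pow 2)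
        have p3 := ((hwda z).pow 3).div_const 3
        have := (p1.add p2).sub p3
        refine this.congr_deriv ?_
        simp only [Pi.mul_apply, Pi.pow_apply]
        ring
      have hWe := hWicc z (Set.Ioo_subset_Icc_self hz)
      have hrw : ((((-(2*z)) * W z + (1 - z^2) * (-(2*lam)*Real.exp (f z) * g z)) * w z
            + ((1 - z^2) * W z) * W z)
            + ((w z)^2 + z * (2 * w z * W z)) - (3 * (w z)^2 * W z)/3)
          = (1 - z^2) * (W z)^2 + (1 - 2*lam) * (w z)^2 := by
        simp only [hwdef]
        linear_combination (-(1 - z^2) * g z * (1 - z^2) * g z) * hWe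
      rw [hrw] at hD
      exact hD.hasDerivWithinAt
    have hbd : Ψ 1 - Ψ (-1) = 0 := by
      simp only [hPsidef]
      rw [hw1, hwm1]
      norm_num
    rw [hbd] at hkey
    rw [integral_add ((by fun_prop : Continuous fun z : ℝ => (1 - z^2) * (W z)^2).intervalIntegrable _ _)
      (((by fun_prop : Continuous fun z : ℝ => (w z)^2).intervalIntegrable _ _).const_mul _),
      intervalIntegral.integral_const_mul] at hkey
    linarith
  -- Poincaré and conclusion S = 0
  have hpoin := poincare hwc hWc hwda hmean
  have hSnn : 0 ≤ ∫ z in (-1:ℝ)..1, (w z)^2 :=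
    integral_nonneg (by norm_num) (fun u _ => sq_nonneg _)
  have hSzero : (∫ z in (-1:ℝ)..1, (w z)^2) = 0 := by nlinarith
  -- w vanishes on Icc
  have hwzero : ∀ z ∈ Set.Icc (-1:ℝ) 1, w z = 0 := by
    intro z hz
    by_contra hne
    have hpos : 0 < ∫ z in (-1:ℝ)..1, (w z)^2 := by
      apply intervalIntegral.integral_pos (by norm_num)
        (Continuous.continuousOn (by fun_prop)) (fun u _ => sq_nonneg _)
      exact ⟨z, hz, by positivity⟩
    linarith
  -- g vanishes on Icc
  have hgIoo : ∀ z ∈ Set.Ioo (-1:ℝ) 1, g z = 0 := by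
    intro z hz
    have hw0 := hwzero z (Set.Ioo_subset_Icc_self hz)
    have hne : (1 - z^2) ≠ 0 := by nlinarith [hz.1, hz.2]
    simp only [hwdef] at hw0
    rcases mul_eq_zero.mp hw0 with hc | hc
    · exact absurd hc hne
    · exact hc
  have hgIcc : ∀ z ∈ Set.Icc (-1:ℝ) 1, g z = 0 := by
    have heqon : Set.EqOn g (fun _ => (0:ℝ)) (Set.Ioo (-1:ℝ) 1) := fun z hz => hgIoo z hz
    have hcl := heqon.closure hgc continuous_const
    intro z hz
    have hzin : z ∈ closure (Set.Ioo (-1:ℝ) 1) := by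
      rw [closure_Ioo (by norm_num : (-1:ℝ) ≠ 1)]
      exact hz
    exact hcl hzin
  -- f constant on Icc
  have hconst : ∀ z ∈ Set.Icc (-1:ℝ) 1, f z = f 0 := by
    intro z hz
    have hftc : ∫ t in (0:ℝ)..z, g t = f z - f 0 :=
      integral_eq_sub_of_hasDerivAt (fun t _ => hfda t) (hgc.intervalIntegrable _ _)
    have hzero : (∫ t in (0:ℝ)..z, g t) = 0 := by
      rw [intervalIntegral.integral_congr (g := fun _ => (0:ℝ)) ?_]
      · simp
      · intro t ht
        apply hgIcc
        rcases Set.mem_uIcc.mp ht with ⟨h1t, h2t⟩ | ⟨h1t, h2t⟩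
        · exact ⟨by linarith [hz.1], by linarith [hz.2]⟩
        · exact ⟨by linarith [hz.1], by linarith [hz.2]⟩
    linarith
  -- h 0 = 0
  have hh0 : h 0 = 0 := by
    have hev : g =ᶠ[nhds 0] fun _ => (0:ℝ) := by
      filter_upwards [Ioo_mem_nhds (by norm_num : (-1:ℝ) < 0) (by norm_num : (0:ℝ) < 1)]
        with t ht
      exact hgIoo t ht
    have hd := hev.deriv_eq
    rw [deriv_const] at hd
    exact hd
  -- conclude
  have h00 := heq 0 (by norm_num)
  rw [hh0] at h00
  norm_num at h00
  have hexp1 : Real.exp (f 0) = 1 := by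
    have hlam' : lam ≠ 0 := ne_of_gt hlam0
    have : lam * 1 = lam * Real.exp (f 0) := by linarith
    exact (mul_left_cancel₀ hlam' this).symm
  have hf00 : f 0 = 0 := by rwa [Real.exp_eq_one_iff] at hexp1
  intro z hz
  rw [hconst z hz, hf00]
end

section
/- For 0 < ε < 1, let u_ε(x) = (1+|x|^{2(α+1)})^{−ε/(1−ε)} on ℝ² with α > −1, and a_ε = −ε(α+1)/(1−ε). Then ∫_{ℝ²} |x|^{2α} (1+|x|^{2(1+α)})^{−2} u_ε(x)² |x|^{−2a_ε} dx = (π/(α+1)) Γ(1/(1−ε))² / Γ(2/(1−ε)). -/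
/-!
In polar coordinates the integral becomes `2π ∫₀^∞ r^{2(α+1)c - 1} (1 + r^{2(α+1)})^{-2c} dr`
with `c = 1/(1-ε)`, because the weight `|x|^{-2a_ε}` and the power `u_ε²` merge with
`|x|^{2α}` and `(1+|x|^{2(1+α)})^{-2}` into single powers. The substitution `t = r^{2(α+1)}`
turns this into `(π/(α+1)) ∫₀^∞ t^{c-1} (1+t)^{-2c} dt`, and `t = u/(1-u)` identifies the last
integral with Euler's beta integral `B(c, c) = Γ(c)²/Γ(2c)`.
-/

open MeasureTheory Real Set

lemma integral_rpow_mul_one_sub_rpow_eq_beta {a b : ℝ} (ha : 0 < a) (hb : 0 < b) :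
    ∫ u in (0 : ℝ)..1, u ^ (a - 1) * (1 - u) ^ (b - 1) = ProbabilityTheory.beta a b := by
  have hB : Complex.betaIntegral a b =
      ((∫ u in (0 : ℝ)..1, u ^ (a - 1) * (1 - u) ^ (b - 1) : ℝ) : ℂ) := by
    rw [Complex.betaIntegral, ← intervalIntegral.integral_ofReal]
    refine intervalIntegral.integral_congr fun u hu => ?_
    rw [uIcc_of_le zero_le_one] at hu
    push_cast
    rw [Complex.ofReal_cpow hu.1, Complex.ofReal_cpow (by linarith [hu.2])]
    push_cast
    ring
  simpa [hB] using (ProbabilityTheory.beta_eq_betaIntegralReal a b ha hb).symm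

lemma hasDerivAt_div_one_add {t : ℝ} (ht : 1 + t ≠ 0) :
    HasDerivAt (fun t : ℝ => t / (1 + t)) ((1 + t) ^ 2)⁻¹ t :=
  ((hasDerivAt_id' t).div ((hasDerivAt_id' t).const_add 1) ht).congr_deriv (by ring)

lemma strictMonoOn_div_one_add : StrictMonoOn (fun t : ℝ => t / (1 + t)) (Ioi 0) := by
  intro s (hs : 0 < s) t (ht : 0 < t) hst
  rw [div_lt_div_iff₀ (by linarith) (by linarith)]
  linarith

lemma image_div_one_add_Ioi : (fun t : ℝ => t / (1 + t)) '' Ioi 0 = Ioo 0 1 := by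
  ext u
  constructor
  · rintro ⟨t, ht : 0 < t, rfl⟩
    exact ⟨by positivity, (div_lt_one (by linarith)).mpr (by linarith)⟩
  · rintro ⟨hu0, hu1⟩
    refine ⟨u / (1 - u), div_pos hu0 (by linarith), ?_⟩
    have : 1 - u ≠ 0 := by linarith
    field_simp
    ring

lemma integral_Ioi_rpow_mul_one_add_rpow_eq_beta {a b : ℝ} (ha : 0 < a) (hb : 0 < b) :
    ∫ t in Ioi (0 : ℝ), t ^ (a - 1) * (1 + t) ^ (-(a + b)) = ProbabilityTheory.beta a b := by
  have hsub := integral_image_eq_integral_abs_deriv_smul measurableSet_Ioi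
    (fun t ht => (hasDerivAt_div_one_add (by linarith [mem_Ioi.mp ht])).hasDerivWithinAt)
    strictMonoOn_div_one_add.injOn (fun u => u ^ (a - 1) * (1 - u) ^ (b - 1))
  rw [image_div_one_add_Ioi, ← integral_Ioc_eq_integral_Ioo,
    ← intervalIntegral.integral_of_le zero_le_one,
    integral_rpow_mul_one_sub_rpow_eq_beta ha hb] at hsub
  rw [hsub]
  refine setIntegral_congr_fun measurableSet_Ioi fun t (ht : 0 < t) => ?_
  have hs : 0 < 1 + t := by linarith
  have h_one_sub : 1 - t / (1 + t) = (1 + t)⁻¹ := by field_simp; ring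
  have h_exp : (1 + t) ^ (-(a + b))
      = ((1 + t) ^ 2)⁻¹ * ((1 + t) ^ (a - 1))⁻¹ * ((1 + t) ^ (b - 1))⁻¹ := by
    rw [show -(a + b) = -(2 : ℝ) + -(a - 1) + -(b - 1) by ring, rpow_add hs, rpow_add hs,
      rpow_neg hs.le, rpow_neg hs.le, rpow_neg hs.le, rpow_two]
  rw [smul_eq_mul, abs_of_pos (by positivity), h_one_sub, div_rpow ht.le hs.le, inv_rpow hs.le,
    h_exp]
  ring

lemma integral_Ioi_rpow_mul_one_add_rpow_rpow_eq_beta {p a b : ℝ} (hp : 0 < p) (ha : 0 < a)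
    (hb : 0 < b) :
    ∫ r in Ioi (0 : ℝ), r ^ (p * a - 1) * (1 + r ^ p) ^ (-(a + b))
      = p⁻¹ * ProbabilityTheory.beta a b := by
  have hsub := integral_comp_rpow_Ioi_of_pos
    (g := fun t => t ^ (a - 1) * (1 + t) ^ (-(a + b))) hp
  rw [integral_Ioi_rpow_mul_one_add_rpow_eq_beta ha hb] at hsub
  rw [← hsub, ← integral_const_mul]
  refine setIntegral_congr_fun measurableSet_Ioi fun r (hr : 0 < r) => ?_
  have h_exp : r ^ (p * a - 1) = r ^ (p - 1) * (r ^ p) ^ (a - 1) := by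
    rw [← rpow_mul hr.le, ← rpow_add hr]
    ring_nf
  rw [smul_eq_mul, h_exp]
  field_simp

lemma integral_fun_norm_euclideanSpace_fin_two {F : Type*} [NormedAddCommGroup F]
    [NormedSpace ℝ F] (f : ℝ → F) :
    ∫ x : EuclideanSpace ℝ (Fin 2), f ‖x‖ = (2 * π) • ∫ r in Ioi (0 : ℝ), r • f r := by
  rw [integral_fun_norm_addHaar, finrank_euclideanSpace_fin, measureReal_def,
    EuclideanSpace.volume_ball_fin_two, mul_smul, ← ofNat_smul_eq_nsmul ℝ]
  simp [ENNReal.toReal_ofReal pi_nonneg]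

/-- `|x|^{2α} (1+|x|^{2(1+α)})^{-2} u_ε(x)² |x|^{-2a_ε}` at `|x| = r`. -/
noncomputable def cknIntegrand (α ε r : ℝ) : ℝ :=
  r ^ (2 * α) * ((1 + r ^ (2 * (1 + α))) ^ 2)⁻¹
    * ((1 + r ^ (2 * (α + 1))) ^ (-(ε / (1 - ε)))) ^ 2
    * r ^ (-(2 * (-(ε * (α + 1)) / (1 - ε))))

lemma mul_cknIntegrand (α ε : ℝ) (hε : ε ≠ 1) {r : ℝ} (hr : 0 < r) :
    r * cknIntegrand α ε r
      = r ^ (2 * (α + 1) * (1 / (1 - ε)) - 1)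
        * (1 + r ^ (2 * (α + 1))) ^ (-(1 / (1 - ε) + 1 / (1 - ε))) := by
  have h1ε : 1 - ε ≠ 0 := sub_ne_zero.mpr hε.symm
  set s := 1 + r ^ (2 * (α + 1))
  have hs : 0 < s := by positivity
  have hr_exp : r * r ^ (2 * α) * r ^ (-(2 * (-(ε * (α + 1)) / (1 - ε))))
      = r ^ (2 * (α + 1) * (1 / (1 - ε)) - 1) := by
    rw [mul_assoc, ← rpow_add hr, mul_comm r, ← rpow_add_one hr.ne']
    congr 1
    field_simp
    ring
  have hs_exp : s ^ (-(1 / (1 - ε) + 1 / (1 - ε)))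
      = (s ^ 2)⁻¹ * (s ^ (-(ε / (1 - ε)))) ^ 2 := by
    rw [← rpow_natCast, ← rpow_natCast, ← rpow_mul hs.le, ← rpow_neg hs.le, ← rpow_add hs]
    congr 1
    field_simp
    ring
  rw [cknIntegrand, show 2 * (1 + α) = 2 * (α + 1) by ring, ← hr_exp, hs_exp]
  ring

theorem ckn_normalization_general (α ε : ℝ) (hα : -1 < α) (hε1 : ε < 1) :
    ∫ x : EuclideanSpace ℝ (Fin 2),
        ‖x‖ ^ (2 * α) * ((1 + ‖x‖ ^ (2 * (1 + α))) ^ 2)⁻¹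
          * ((1 + ‖x‖ ^ (2 * (α + 1))) ^ (-(ε / (1 - ε)))) ^ 2
          * ‖x‖ ^ (-(2 * (-(ε * (α + 1)) / (1 - ε))))
      = Real.pi / (α + 1) * (Real.Gamma (1 / (1 - ε))) ^ 2 / Real.Gamma (2 / (1 - ε)) := by
  have hp : 0 < 2 * (α + 1) := by linarith
  have hc : 0 < 1 / (1 - ε) := by simpa using hε1
  change ∫ x : EuclideanSpace ℝ (Fin 2), cknIntegrand α ε ‖x‖ = _
  simp only [integral_fun_norm_euclideanSpace_fin_two, smul_eq_mul]
  rw [setIntegral_congr_fun measurableSet_Ioi fun r hr => mul_cknIntegrand α ε hε1.ne hr,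
    integral_Ioi_rpow_mul_one_add_rpow_rpow_eq_beta hp hc hc, ProbabilityTheory.beta,
    show 1 / (1 - ε) + 1 / (1 - ε) = 2 / (1 - ε) by ring]
  field_simp

/-- For `0 < ε < 1`, `α > -1`, `u_ε(x) = (1+|x|^{2(α+1)})^{-ε/(1-ε)}` and
`a_ε = -ε(α+1)/(1-ε)`, one has
`∫_{ℝ²} |x|^{2α} (1+|x|^{2(1+α)})⁻² u_ε² |x|^{-2a_ε} dx
  = (π/(α+1)) Γ(1/(1-ε))² / Γ(2/(1-ε))`. -/
theorem ckn_normalization (α ε : ℝ) (hα : -1 < α) (hε0 : 0 < ε) (hε1 : ε < 1) :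
    ∫ x : EuclideanSpace ℝ (Fin 2),
        ‖x‖ ^ (2 * α) * ((1 + ‖x‖ ^ (2 * (1 + α))) ^ 2)⁻¹
          * ((1 + ‖x‖ ^ (2 * (α + 1))) ^ (-(ε / (1 - ε)))) ^ 2
          * ‖x‖ ^ (-(2 * (-(ε * (α + 1)) / (1 - ε))))
      = Real.pi / (α + 1) * (Real.Gamma (1 / (1 - ε))) ^ 2 / Real.Gamma (2 / (1 - ε)) :=
  ckn_normalization_general α ε hα hε1
end

section
/- Let ξ(s) = (1/2)(cosh s)⁻² and f⋆(s) = (cosh s)^{−2/(p−1)} for p > 2. Then for any bounded continuous w on ℝ, lim_{p→∞} ∫_ℝ (f⋆(s)(1 + w(s)/p))^p ds = 2∫_ℝ e^{w(s)} ξ(s) ds. -/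
/-!
Write the integrand as `(cosh s)^{-2p/(p-1)} (1 + w(s)/p)^p`. For each `s` the first factor tends
to `(cosh s)⁻²` and the second to `e^{w(s)}`. Once `p > 1` and `p ≥ C` the first factor is at most
`(cosh s)⁻²` (since `2p/(p-1) ≥ 2` and `cosh s ≥ 1`) and the second at most `e^C` (by
`1 + t ≤ eᵗ`), so dominated convergence applies with the majorant `e^C (cosh s)⁻²`, integrable because
`cosh² s = 1 + sinh² s ≥ 1 + s²`.
-/

open MeasureTheory Filter Topology Real

lemma sq_le_sinh_sq (x : ℝ) : x ^ 2 ≤ sinh x ^ 2 := by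
  rcases le_total 0 x with hx | hx
  · exact pow_le_pow_left₀ hx (self_le_sinh_iff.mpr hx) 2
  · nlinarith [sinh_le_self_iff.mpr hx]

lemma inv_cosh_sq_le_inv_one_add_sq (x : ℝ) : (cosh x ^ 2)⁻¹ ≤ (1 + x ^ 2)⁻¹ := by
  rw [cosh_sq']
  exact inv_anti₀ (by positivity) (by linarith [sq_le_sinh_sq x])

lemma integrable_inv_cosh_sq : Integrable fun x : ℝ => (cosh x ^ 2)⁻¹ := by
  refine integrable_inv_one_add_sq.mono' ?_ (ae_of_all _ fun x => ?_)
  · exact (continuous_cosh.pow 2).inv₀ (fun x => (pow_pos (cosh_pos x) 2).ne')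
      |>.aestronglyMeasurable
  · rw [norm_of_nonneg (by positivity)]
    exact inv_cosh_sq_le_inv_one_add_sq x

lemma one_add_div_nonneg {x C p : ℝ} (hx : |x| ≤ C) (hp : 0 < p) (hCp : C ≤ p) :
    0 ≤ 1 + x / p := by
  have h : 0 ≤ (p + x) / p := div_nonneg (by linarith [neg_abs_le x]) hp.le
  rwa [add_div, div_self hp.ne'] at h

lemma one_add_div_rpow_le_exp {x p : ℝ} (hp : 0 < p) (hx : 0 ≤ 1 + x / p) :
    (1 + x / p) ^ p ≤ exp x :=
  calc (1 + x / p) ^ p ≤ exp (x / p) ^ p :=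
        rpow_le_rpow hx (by linarith [add_one_le_exp (x / p)]) hp.le
    _ = exp x := by rw [← exp_mul, div_mul_cancel₀ _ hp.ne']

lemma rpow_neg_two_div_sub_one_mul_le {c p : ℝ} (hc : 1 ≤ c) (hp : 1 < p) :
    c ^ (-(2 / (p - 1)) * p) ≤ (c ^ 2)⁻¹ := by
  have hexp : -(2 / (p - 1)) * p ≤ -2 := by
    rw [neg_mul, neg_le_neg_iff, div_mul_eq_mul_div, le_div_iff₀ (by linarith)]
    linarith
  calc c ^ (-(2 / (p - 1)) * p) ≤ c ^ (-2 : ℝ) := rpow_le_rpow_of_exponent_le hc hexp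
    _ = (c ^ 2)⁻¹ := by rw [rpow_neg (by linarith)]; norm_cast

lemma tendsto_rpow_neg_two_div_sub_one_mul {c : ℝ} (hc : 0 < c) :
    Tendsto (fun p : ℝ => c ^ (-(2 / (p - 1)) * p)) atTop (𝓝 (c ^ 2)⁻¹) := by
  have hexp : Tendsto (fun p : ℝ => -(2 / (p - 1)) * p) atTop (𝓝 (-2)) := by
    have h : Tendsto (fun p : ℝ => -2 - 2 / (p - 1)) atTop (𝓝 (-2 - 0)) :=
      tendsto_const_nhds.sub <|
        tendsto_const_nhds.div_atTop (tendsto_atTop_add_const_right _ (-1) tendsto_id)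
    rw [sub_zero] at h
    refine h.congr' ?_
    filter_upwards [eventually_gt_atTop 1] with p hp
    field_simp [(sub_pos.mpr hp).ne']
    ring
  have h : Tendsto (fun p : ℝ => c ^ (-(2 / (p - 1)) * p)) atTop (𝓝 (c ^ (-2 : ℝ))) :=
    ((continuousAt_const_rpow hc.ne').tendsto).comp hexp
  rwa [rpow_neg hc.le, show (2 : ℝ) = (2 : ℕ) by norm_num, rpow_natCast] at h
lemma rpow_mul_one_add_div_rpow_eq {c x p : ℝ} (hc : 0 < c) (hx : 0 ≤ 1 + x / p) :
    (c ^ (-(2 / (p - 1))) * (1 + x / p)) ^ p = c ^ (-(2 / (p - 1)) * p) * (1 + x / p) ^ p := by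
  rw [mul_rpow (rpow_nonneg hc.le _) hx, rpow_mul hc.le]

lemma norm_rpow_mul_one_add_div_rpow_le {c x C p : ℝ} (hc : 1 ≤ c) (hx : |x| ≤ C) (hp : 1 < p)
    (hCp : C ≤ p) : ‖(c ^ (-(2 / (p - 1))) * (1 + x / p)) ^ p‖ ≤ exp C * (c ^ 2)⁻¹ := by
  have hx' := one_add_div_nonneg hx (by linarith) hCp
  rw [norm_of_nonneg (rpow_nonneg (by positivity) p),
    rpow_mul_one_add_div_rpow_eq (by linarith) hx', mul_comm (exp C)]
  exact mul_le_mul (rpow_neg_two_div_sub_one_mul_le hc hp)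
    ((one_add_div_rpow_le_exp (by linarith) hx').trans (exp_le_exp.mpr (le_of_abs_le hx)))
    (rpow_nonneg hx' p) (by positivity)

lemma tendsto_rpow_mul_one_add_div_rpow {c : ℝ} (hc : 0 < c) (x : ℝ) :
    Tendsto (fun p : ℝ => (c ^ (-(2 / (p - 1))) * (1 + x / p)) ^ p) atTop
      (𝓝 (exp x * (c ^ 2)⁻¹)) := by
  rw [mul_comm]
  refine ((tendsto_rpow_neg_two_div_sub_one_mul hc).mul
    (tendsto_one_add_div_rpow_exp x)).congr' ?_
  filter_upwards [eventually_ge_atTop (max 1 |x|)] with p hp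
  rw [rpow_mul_one_add_div_rpow_eq hc
    (one_add_div_nonneg le_rfl (by linarith [le_max_left 1 |x|]) (le_of_max_le_right hp))]

/-- With `ξ(s) = (1/2)(cosh s)⁻²` and `f⋆(s) = (cosh s)^{-2/(p-1)}`, for any bounded
continuous `w : ℝ → ℝ`,
`lim_{p→∞} ∫_ℝ (f⋆(s)(1 + w(s)/p))^p ds = 2 ∫_ℝ e^{w(s)} ξ(s) ds`. -/
theorem tendsto_GN_line (w : ℝ → ℝ) (hw : Continuous w) (C : ℝ) (hb : ∀ s, |w s| ≤ C) :
    Tendsto (fun p : ℝ => ∫ s : ℝ,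
        ((Real.cosh s) ^ (-(2 / (p - 1))) * (1 + w s / p)) ^ p)
      atTop
      (nhds (2 * ∫ s : ℝ, Real.exp (w s) * ((1 / 2) * ((Real.cosh s) ^ 2)⁻¹))) := by
  have hlimit : 2 * ∫ s : ℝ, exp (w s) * ((1 / 2) * (cosh s ^ 2)⁻¹)
      = ∫ s : ℝ, exp (w s) * (cosh s ^ 2)⁻¹ := by
    simp_rw [mul_left_comm _ (1 / 2 : ℝ), integral_const_mul]
    ring
  rw [hlimit]
  refine tendsto_integral_filter_of_dominated_convergence (fun s => exp C * (cosh s ^ 2)⁻¹)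
    ?_ ?_ (integrable_inv_cosh_sq.const_mul _)
    (ae_of_all _ fun s => tendsto_rpow_mul_one_add_div_rpow (cosh_pos s) (w s))
  · filter_upwards [eventually_ge_atTop 0] with p hp
    have hcosh : Continuous fun s => cosh s ^ (-(2 / (p - 1))) :=
      continuous_cosh.rpow_const fun s => Or.inl (cosh_pos s).ne'
    exact ((hcosh.mul (continuous_const.add (hw.div_const p))).rpow_const
      fun _ => Or.inr hp).aestronglyMeasurable
  · filter_upwards [eventually_gt_atTop 1, eventually_ge_atTop C] with p hp hCp
    exact ae_of_all _ fun s => norm_rpow_mul_one_add_div_rpow_le (one_le_cosh s) (hb s) hp hCp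
end
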